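/- arXiv:2202.04960 — 5 statements merged into one kernel-verified Lean document; each statement's English description precedes it below -/
import Mathlib

section
/- A bounded linear operator T : X → Y between Banach spaces satisfies T = T T' T for some bounded T' : Y → X (inner regularity) if and only if the kernel of T is a closed complemented subspace of X and the range of T is a closed complemented subspace of Y. -/
/-!
If `T S T = T`, then `S T` and `T S` are continuous idempotents with `ker (S T) = ker T` and
`range (T S) = range T`, and the range and kernel of a continuous idempotent are topological
complements of each other.

Conversely, let `W` be a closed complement of `ker T`. Then `T` maps the Banach space `W`
injectively onto the closed complemented subspace `range T`, so by the open mapping theorem it has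
a continuous left inverse `G : Y → W`. Since every `T x` is of the form `T w` with `w ∈ W`, the
operator `S = G`, viewed in `X`, satisfies `T S T = T`.
-/

open Function

namespace ContinuousLinearMap

section GeneralizedInverse

variable {R M N : Type*} [Ring R]
  [TopologicalSpace M] [AddCommGroup M] [Module R M]
  [TopologicalSpace N] [AddCommGroup N] [Module R N]
  {T : M →L[R] N} {S : N →L[R] M}

lemma isIdempotentElem_comp_of_comp_comp_eq (h : T ∘L S ∘L T = T) :
    IsIdempotentElem (T ∘L S) := by
  change (T ∘L S ∘L T) ∘L S = T ∘L S
  rw [h]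

lemma isIdempotentElem_comp_of_comp_comp_eq_swap (h : T ∘L S ∘L T = T) :
    IsIdempotentElem (S ∘L T) := by
  change S ∘L (T ∘L S ∘L T) = S ∘L T
  rw [h]

lemma ker_comp_eq_of_comp_comp_eq (h : T ∘L S ∘L T = T) : (S ∘L T).ker = T.ker :=
  le_antisymm (fun x hx ↦ by rw [← h]; simpa using congr(T $hx))
    (LinearMap.ker_le_ker_comp (T : M →ₗ[R] N) (S : N →ₗ[R] M))

lemma range_comp_eq_of_comp_comp_eq (h : T ∘L S ∘L T = T) : (T ∘L S).range = T.range :=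
  le_antisymm (LinearMap.range_comp_le_range (S : N →ₗ[R] M) (T : M →ₗ[R] N))
    (by rintro _ ⟨x, rfl⟩; exact ⟨T x, congr($h x)⟩)

lemma closedComplemented_ker_of_comp_comp_eq [ContinuousSub M] (h : T ∘L S ∘L T = T) :
    T.ker.ClosedComplemented := by
  rw [← ker_comp_eq_of_comp_comp_eq h]
  exact (IsIdempotentElem.isTopCompl
    (isIdempotentElem_comp_of_comp_comp_eq_swap h)).symm.closedComplemented

lemma closedComplemented_range_of_comp_comp_eq (h : T ∘L S ∘L T = T) :
    T.range.ClosedComplemented := by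
  rw [← range_comp_eq_of_comp_comp_eq h]
  exact (IsIdempotentElem.isTopCompl (isIdempotentElem_comp_of_comp_comp_eq h)).closedComplemented

end GeneralizedInverse

variable {𝕜 E F : Type*} [NontriviallyNormedField 𝕜]
  [NormedAddCommGroup E] [NormedSpace 𝕜 E] [CompleteSpace E]
  [NormedAddCommGroup F] [NormedSpace 𝕜 F] [CompleteSpace F]

theorem exists_comp_comp_eq_of_closedComplemented {T : E →L[𝕜] F}
    (hker : T.ker.ClosedComplemented) (hrange : T.range.ClosedComplemented) :
    ∃ S : F →L[𝕜] E, T ∘L S ∘L T = T := by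
  obtain ⟨W, hW_closed, hW⟩ := hker.exists_isClosed_isCompl
  have : CompleteSpace W := hW_closed.completeSpace_coe
  have hmap : W.map (T : E →ₗ[𝕜] F) = T.range :=
    Submodule.map_eq_range_iff.mpr hW.codisjoint.symm
  have hrange_restrict : (T ∘L W.subtypeL).range = T.range := by
    rw [← hmap, ← LinearMap.range_domRestrict]
    rfl
  have hinj : Injective (T ∘L W.subtypeL) := by
    rw [injective_iff_map_eq_zero]
    exact fun w hw ↦ Subtype.ext (Submodule.disjoint_def.mp hW.disjoint w hw w.2)
  have hclosed : IsClosed (Set.range (T ∘L W.subtypeL)) := by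
    rw [← coe_coe, ← LinearMap.coe_range, hrange_restrict]
    exact hrange.isClosed
  obtain ⟨G, hG⟩ := HasLeftInverse.of_injective_of_isClosed_range_of_closedComplement_range
    hinj hclosed (hrange_restrict ▸ hrange)
  refine ⟨W.subtypeL ∘L G, ext fun x ↦ ?_⟩
  obtain ⟨w, hw, hwx⟩ : T x ∈ W.map (T : E →ₗ[𝕜] F) := hmap ▸ T.mem_range_self x
  have hGw : G (T w) = ⟨w, hw⟩ := hG ⟨w, hw⟩
  simp only [coe_coe] at hwx
  simp only [comp_apply, ← hwx, hGw, Submodule.subtypeL_apply]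

end ContinuousLinearMap

/-- A bounded linear operator `T : X → Y` between Banach spaces is inner regular
(`T = T T' T` for some bounded `T'`) iff its kernel is closed complemented in `X` and
its range is closed and complemented in `Y`. -/
theorem innerRegular_iff_ker_range_closedComplemented {X Y : Type*}
    [NormedAddCommGroup X] [NormedSpace ℝ X] [CompleteSpace X]
    [NormedAddCommGroup Y] [NormedSpace ℝ Y] [CompleteSpace Y]
    (T : X →L[ℝ] Y) :
    (∃ T' : Y →L[ℝ] X, T.comp (T'.comp T) = T) ↔
      ((LinearMap.ker (T : X →ₗ[ℝ] Y)).ClosedComplemented ∧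
        IsClosed (LinearMap.range (T : X →ₗ[ℝ] Y) : Set Y) ∧
        (LinearMap.range (T : X →ₗ[ℝ] Y)).ClosedComplemented) := by
  constructor
  · rintro ⟨T', h⟩
    have hrange := T.closedComplemented_range_of_comp_comp_eq h
    exact ⟨T.closedComplemented_ker_of_comp_comp_eq h, hrange.isClosed, hrange⟩
  · rintro ⟨hker, -, hrange⟩
    exact T.exists_comp_comp_eq_of_closedComplemented hker hrange
end

section
/- Let A ∈ B(X) be left invertible, C ∈ B(Z) right invertible, and B ∈ B(Y) inner regular. Suppose there exist left invertible (bounded injective with closed complemented range) operators J₁ : N(B) → X/R(A) and J₂ : Y/R(B) → N(C) such that (X/R(A))/R(J₁) is isomorphic to N(C)/R(J₂). Then there exist D ∈ B(Y,X), E ∈ B(Z,X), F ∈ B(Z,Y) such that the upper triangular matrix M_{D,E,F} with diagonal A, B, C is invertible on X ⊕ Y ⊕ Z. -/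
/-- An operator between (semi)normed spaces is invertible if it has a bounded two-sided
inverse. -/
def IsInvertibleCLM {U V : Type*} [SeminormedAddCommGroup U] [NormedSpace ℝ U]
    [SeminormedAddCommGroup V] [NormedSpace ℝ V] (T : U →L[ℝ] V) : Prop :=
  ∃ T' : V →L[ℝ] U, T'.comp T = ContinuousLinearMap.id ℝ U ∧
    T.comp T' = ContinuousLinearMap.id ℝ V

/-- The `3 × 3` upper triangular operator matrix with diagonal `A, B, C` and strictly
upper entries `D, E, F`, acting on `X ⊕ Y ⊕ Z` by
`(x, y, z) ↦ (A x + D y + E z, B y + F z, C z)`. -/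
def triM {X Y Z : Type*}
    [NormedAddCommGroup X] [NormedSpace ℝ X]
    [NormedAddCommGroup Y] [NormedSpace ℝ Y]
    [NormedAddCommGroup Z] [NormedSpace ℝ Z]
    (A : X →L[ℝ] X) (B : Y →L[ℝ] Y) (C : Z →L[ℝ] Z)
    (D : Y →L[ℝ] X) (E : Z →L[ℝ] X) (F : Z →L[ℝ] Y) :
    (X × Y × Z) →L[ℝ] (X × Y × Z) :=
  (A.comp (ContinuousLinearMap.fst ℝ X (Y × Z)) +
      D.comp ((ContinuousLinearMap.fst ℝ Y Z).comp (ContinuousLinearMap.snd ℝ X (Y × Z))) +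
      E.comp ((ContinuousLinearMap.snd ℝ Y Z).comp (ContinuousLinearMap.snd ℝ X (Y × Z)))).prod
    ((B.comp ((ContinuousLinearMap.fst ℝ Y Z).comp (ContinuousLinearMap.snd ℝ X (Y × Z))) +
        F.comp ((ContinuousLinearMap.snd ℝ Y Z).comp (ContinuousLinearMap.snd ℝ X (Y × Z)))).prod
      (C.comp ((ContinuousLinearMap.snd ℝ Y Z).comp (ContinuousLinearMap.snd ℝ X (Y × Z)))))

set_option maxHeartbeats 1600000


noncomputable def mkQL {M : Type*} [SeminormedAddCommGroup M] [NormedSpace ℝ M]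
    (S : Submodule ℝ M) : M →L[ℝ] M ⧸ S :=
  S.mkQ.mkContinuous 1 fun x => by
    rw [Submodule.mkQ_apply, one_mul]; exact Submodule.Quotient.norm_mk_le S x

@[simp] lemma mkQL_apply {M : Type*} [SeminormedAddCommGroup M] [NormedSpace ℝ M]
    (S : Submodule ℝ M) (x : M) : mkQL S x = Submodule.Quotient.mk x := rfl

noncomputable def liftQL {M W : Type*} [SeminormedAddCommGroup M] [NormedSpace ℝ M]
    [SeminormedAddCommGroup W] [NormedSpace ℝ W] (S : Submodule ℝ M)
    (g : M →L[ℝ] W) (h : ∀ x ∈ S, g x = 0) : (M ⧸ S) →L[ℝ] W :=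
  (S.liftQ (g : M →ₗ[ℝ] W) (fun x hx => LinearMap.mem_ker.mpr (h x hx))).mkContinuous ‖g‖
    (fun q => by
      refine le_of_forall_pos_le_add (fun ε hε => ?_)
      obtain ⟨m, rfl, hm⟩ := Submodule.Quotient.norm_mk_lt q
        (ε := ε / (‖g‖ + 1)) (by positivity)
      have h1 : ‖g m‖ ≤ ‖g‖ * ‖m‖ := g.le_opNorm m
      have h3 : (0:ℝ) ≤ ‖g‖ := norm_nonneg g
      have key : ‖g‖ * (ε / (‖g‖ + 1)) ≤ ε := by
        rw [mul_div_assoc', div_le_iff₀ (by positivity)]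
        nlinarith
      calc ‖(S.liftQ (g : M →ₗ[ℝ] W) _) (Submodule.Quotient.mk m)‖ = ‖g m‖ := rfl
        _ ≤ ‖g‖ * ‖m‖ := h1
        _ ≤ ‖g‖ * (‖(Submodule.Quotient.mk m : M ⧸ S)‖ + ε / (‖g‖ + 1)) := by nlinarith
        _ ≤ ‖g‖ * ‖(Submodule.Quotient.mk m : M ⧸ S)‖ + ε := by nlinarith)

@[simp] lemma liftQL_mk {M W : Type*} [SeminormedAddCommGroup M] [NormedSpace ℝ M]
    [SeminormedAddCommGroup W] [NormedSpace ℝ W] (S : Submodule ℝ M)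
    (g : M →L[ℝ] W) (h : ∀ x ∈ S, g x = 0) (x : M) :
    liftQL S g h (Submodule.Quotient.mk x) = g x := rfl

lemma mk_liftQL {M : Type*} [SeminormedAddCommGroup M] [NormedSpace ℝ M]
    (S : Submodule ℝ M) (g : M →L[ℝ] M) (h : ∀ x ∈ S, g x = 0)
    (hg : ∀ x, x - g x ∈ S) (q : M ⧸ S) :
    mkQL S (liftQL S g h q) = q := by
  obtain ⟨x, rfl⟩ := Submodule.Quotient.mk_surjective S q
  rw [liftQL_mk, mkQL_apply]
  exact (Submodule.Quotient.eq S).mpr (by simpa [neg_sub] using S.neg_mem (hg x))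

lemma triM_apply {X Y Z : Type*}
    [NormedAddCommGroup X] [NormedSpace ℝ X]
    [NormedAddCommGroup Y] [NormedSpace ℝ Y]
    [NormedAddCommGroup Z] [NormedSpace ℝ Z]
    (A : X →L[ℝ] X) (B : Y →L[ℝ] Y) (C : Z →L[ℝ] Z)
    (D : Y →L[ℝ] X) (E : Z →L[ℝ] X) (F : Z →L[ℝ] Y) (x : X) (y : Y) (z : Z) :
    triM A B C D E F (x, y, z) = (A x + D y + E z, B y + F z, C z) := rfl

/-- Sufficiency part of the completion theorem: if `A` is left invertible, `C` is right
invertible, `B` is inner regular, and there are left invertible operators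
`J₁ : N(B) → X/R(A)`, `J₂ : Y/R(B) → N(C)` with `(X/R(A))/R(J₁) ≅ N(C)/R(J₂)`, then
some completion `M_{D,E,F}` is invertible. -/
theorem completion_sufficient {X Y Z : Type*}
    [NormedAddCommGroup X] [NormedSpace ℝ X] [CompleteSpace X]
    [NormedAddCommGroup Y] [NormedSpace ℝ Y] [CompleteSpace Y]
    [NormedAddCommGroup Z] [NormedSpace ℝ Z] [CompleteSpace Z]
    (A : X →L[ℝ] X) (B : Y →L[ℝ] Y) (C : Z →L[ℝ] Z)
    (hA : ∃ A' : X →L[ℝ] X, A'.comp A = ContinuousLinearMap.id ℝ X)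
    (hC : ∃ C' : Z →L[ℝ] Z, C.comp C' = ContinuousLinearMap.id ℝ Z)
    (hB : ∃ B' : Y →L[ℝ] Y, B.comp (B'.comp B) = B)
    (J₁ : ↥(LinearMap.ker B.toLinearMap) →L[ℝ] (X ⧸ LinearMap.range A.toLinearMap))
    (J₂ : (Y ⧸ LinearMap.range B.toLinearMap) →L[ℝ] ↥(LinearMap.ker C.toLinearMap))
    (hJ₁ : ∃ J₁' : (X ⧸ LinearMap.range A.toLinearMap) →L[ℝ] ↥(LinearMap.ker B.toLinearMap),
      J₁'.comp J₁ = ContinuousLinearMap.id ℝ ↥(LinearMap.ker B.toLinearMap))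
    (hJ₂ : ∃ J₂' : ↥(LinearMap.ker C.toLinearMap) →L[ℝ] (Y ⧸ LinearMap.range B.toLinearMap),
      J₂'.comp J₂ = ContinuousLinearMap.id ℝ (Y ⧸ LinearMap.range B.toLinearMap))
    (hquot : Nonempty (((X ⧸ LinearMap.range A.toLinearMap) ⧸ LinearMap.range J₁.toLinearMap)
      ≃L[ℝ] ((↥(LinearMap.ker C.toLinearMap)) ⧸ LinearMap.range J₂.toLinearMap))) :
    ∃ (D : Y →L[ℝ] X) (E : Z →L[ℝ] X) (F : Z →L[ℝ] Y),
      IsInvertibleCLM (triM A B C D E F) := by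
  classical
  obtain ⟨A', hA'⟩ := hA
  obtain ⟨C', hC'⟩ := hC
  obtain ⟨B₀, hB₀⟩ := hB
  obtain ⟨J₁', hJ₁'⟩ := hJ₁
  obtain ⟨J₂', hJ₂'⟩ := hJ₂
  obtain ⟨Φ⟩ := hquot
  -- pointwise versions of the hypotheses
  have idA : ∀ x, A' (A x) = x := fun x => ContinuousLinearMap.ext_iff.mp hA' x
  have idC : ∀ z, C (C' z) = z := fun z => ContinuousLinearMap.ext_iff.mp hC' z
  have hb : ∀ y, B (B₀ (B y)) = B y := fun y => ContinuousLinearMap.ext_iff.mp hB₀ y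
  have idJ1 : ∀ t, J₁' (J₁ t) = t := fun t => ContinuousLinearMap.ext_iff.mp hJ₁' t
  have idJ2 : ∀ s, J₂' (J₂ s) = s := fun s => ContinuousLinearMap.ext_iff.mp hJ₂' s
  -- a reflexive generalized inverse of B
  set B' : Y →L[ℝ] Y := B₀.comp (B.comp B₀) with hB'def
  have idB : ∀ y, B (B' (B y)) = B y := by
    intro y
    show B (B₀ (B (B₀ (B y)))) = B y
    rw [hb (B₀ (B y)), hb y]
  have idB' : ∀ y, B' (B (B' y)) = B' y := by
    intro y
    show B₀ (B (B₀ (B (B₀ (B (B₀ y)))))) = B₀ (B (B₀ y))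
    rw [hb (B₀ (B (B₀ y))), hb (B₀ y)]
  -- the four quotient/section pairs
  set πA : X →L[ℝ] (X ⧸ LinearMap.range A.toLinearMap) := mkQL (LinearMap.range A.toLinearMap) with hπA
  have hgA : ∀ x ∈ LinearMap.range A.toLinearMap, (ContinuousLinearMap.id ℝ X - A.comp A') x = 0 := by
    intro x hx
    obtain ⟨w, rfl⟩ := LinearMap.mem_range.mp hx
    show A w - A (A' (A w)) = 0
    rw [idA w, sub_self]
  set ρA : (X ⧸ LinearMap.range A.toLinearMap) →L[ℝ] X :=
    liftQL (LinearMap.range A.toLinearMap) (ContinuousLinearMap.id ℝ X - A.comp A') hgA with hρA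
  set πB : Y →L[ℝ] (Y ⧸ LinearMap.range B.toLinearMap) := mkQL (LinearMap.range B.toLinearMap) with hπB
  have hgB : ∀ y ∈ LinearMap.range B.toLinearMap, (ContinuousLinearMap.id ℝ Y - B.comp B') y = 0 := by
    intro y hy
    obtain ⟨w, rfl⟩ := LinearMap.mem_range.mp hy
    show B w - B (B' (B w)) = 0
    rw [idB w, sub_self]
  set ρB : (Y ⧸ LinearMap.range B.toLinearMap) →L[ℝ] Y :=
    liftQL (LinearMap.range B.toLinearMap) (ContinuousLinearMap.id ℝ Y - B.comp B') hgB with hρB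
  set π₁ : (X ⧸ LinearMap.range A.toLinearMap) →L[ℝ] ((X ⧸ LinearMap.range A.toLinearMap) ⧸ LinearMap.range J₁.toLinearMap) :=
    mkQL (LinearMap.range J₁.toLinearMap) with hπ₁
  have hg1 : ∀ q ∈ LinearMap.range J₁.toLinearMap,
      (ContinuousLinearMap.id ℝ (X ⧸ LinearMap.range A.toLinearMap) - J₁.comp J₁') q = 0 := by
    intro q hq
    obtain ⟨t, rfl⟩ := LinearMap.mem_range.mp hq
    show J₁ t - J₁ (J₁' (J₁ t)) = 0
    rw [idJ1 t, sub_self]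
  set ρ₁ : ((X ⧸ LinearMap.range A.toLinearMap) ⧸ LinearMap.range J₁.toLinearMap) →L[ℝ] (X ⧸ LinearMap.range A.toLinearMap) :=
    liftQL (LinearMap.range J₁.toLinearMap) (ContinuousLinearMap.id ℝ _ - J₁.comp J₁') hg1 with hρ₁
  set π₂ : ↥(LinearMap.ker C.toLinearMap) →L[ℝ] ((↥(LinearMap.ker C.toLinearMap)) ⧸ LinearMap.range J₂.toLinearMap) :=
    mkQL (LinearMap.range J₂.toLinearMap) with hπ₂
  have hg2 : ∀ k ∈ LinearMap.range J₂.toLinearMap,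
      (ContinuousLinearMap.id ℝ ↥(LinearMap.ker C.toLinearMap) - J₂.comp J₂') k = 0 := by
    intro k hk
    obtain ⟨s, rfl⟩ := LinearMap.mem_range.mp hk
    show J₂ s - J₂ (J₂' (J₂ s)) = 0
    rw [idJ2 s, sub_self]
  set ρ₂ : ((↥(LinearMap.ker C.toLinearMap)) ⧸ LinearMap.range J₂.toLinearMap) →L[ℝ] ↥(LinearMap.ker C.toLinearMap) :=
    liftQL (LinearMap.range J₂.toLinearMap) (ContinuousLinearMap.id ℝ _ - J₂.comp J₂') hg2 with hρ₂
  -- projections onto the kernels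
  set pB : Y →L[ℝ] ↥(LinearMap.ker B.toLinearMap) :=
    (ContinuousLinearMap.id ℝ Y - B'.comp B).codRestrict (LinearMap.ker B.toLinearMap)
      (fun y => LinearMap.mem_ker.mpr (by show B (y - B' (B y)) = 0; rw [map_sub, idB y, sub_self])) with hpB
  set pC : Z →L[ℝ] ↥(LinearMap.ker C.toLinearMap) :=
    (ContinuousLinearMap.id ℝ Z - C'.comp C).codRestrict (LinearMap.ker C.toLinearMap)
      (fun z => LinearMap.mem_ker.mpr (by show C (z - C' (C z)) = 0; rw [map_sub, idC (C z), sub_self])) with hpC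
  -- pointwise identities for the sections
  have ρA_mk : ∀ x : X, ρA (πA x) = x - A (A' x) := fun x => rfl
  have ρB_mk : ∀ y : Y, ρB (πB y) = y - B (B' y) := fun y => rfl
  have ρ1_mk : ∀ q, ρ₁ (π₁ q) = q - J₁ (J₁' q) := fun q => rfl
  have ρ2_mk : ∀ k, ρ₂ (π₂ k) = k - J₂ (J₂' k) := fun k => rfl
  have πρA : ∀ q, πA (ρA q) = q :=
    mk_liftQL _ _ hgA (fun x => by
      simpa [sub_sub_cancel] using LinearMap.mem_range.mpr ⟨A' x, rfl⟩)
  have πρB : ∀ q, πB (ρB q) = q :=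
    mk_liftQL _ _ hgB (fun y => by
      simpa [sub_sub_cancel] using LinearMap.mem_range.mpr ⟨B' y, rfl⟩)
  have πρ1 : ∀ q, π₁ (ρ₁ q) = q :=
    mk_liftQL _ _ hg1 (fun q => by
      simpa [sub_sub_cancel] using LinearMap.mem_range.mpr ⟨J₁' q, rfl⟩)
  have πρ2 : ∀ q, π₂ (ρ₂ q) = q :=
    mk_liftQL _ _ hg2 (fun k => by
      simpa [sub_sub_cancel] using LinearMap.mem_range.mpr ⟨J₂' k, rfl⟩)
  have A'ρA : ∀ q, A' (ρA q) = 0 := by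
    intro q
    obtain ⟨x, rfl⟩ := Submodule.Quotient.mk_surjective _ q
    have : ρA (Submodule.Quotient.mk x) = x - A (A' x) := rfl
    rw [this, map_sub, idA (A' x), sub_self]
  have B'ρB : ∀ q, B' (ρB q) = 0 := by
    intro q
    obtain ⟨y, rfl⟩ := Submodule.Quotient.mk_surjective _ q
    have : ρB (Submodule.Quotient.mk y) = y - B (B' y) := rfl
    rw [this, map_sub, idB' y, sub_self]
  have J1ρ1 : ∀ q, J₁' (ρ₁ q) = 0 := by
    intro q
    obtain ⟨r, rfl⟩ := Submodule.Quotient.mk_surjective _ q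
    have : ρ₁ (Submodule.Quotient.mk r) = r - J₁ (J₁' r) := rfl
    rw [this, map_sub, idJ1 (J₁' r), sub_self]
  have J2ρ2 : ∀ q, J₂' (ρ₂ q) = 0 := by
    intro q
    obtain ⟨k, rfl⟩ := Submodule.Quotient.mk_surjective _ q
    have : ρ₂ (Submodule.Quotient.mk k) = k - J₂ (J₂' k) := rfl
    rw [this, map_sub, idJ2 (J₂' k), sub_self]
  -- vanishing of the quotient maps on the ranges
  have πA_A : ∀ x, πA (A x) = 0 := fun x =>
    (Submodule.Quotient.mk_eq_zero _).mpr (LinearMap.mem_range.mpr ⟨x, rfl⟩)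
  have πB_B : ∀ y, πB (B y) = 0 := fun y =>
    (Submodule.Quotient.mk_eq_zero _).mpr (LinearMap.mem_range.mpr ⟨y, rfl⟩)
  have π1J1 : ∀ t, π₁ (J₁ t) = 0 := fun t =>
    (Submodule.Quotient.mk_eq_zero _).mpr (LinearMap.mem_range.mpr ⟨t, rfl⟩)
  have π2J2 : ∀ s, π₂ (J₂ s) = 0 := fun s =>
    (Submodule.Quotient.mk_eq_zero _).mpr (LinearMap.mem_range.mpr ⟨s, rfl⟩)
  -- identities for the kernel projections
  have pB_coe : ∀ y : Y, ((pB y : Y)) = y - B' (B y) := fun y => rfl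
  have pC_coe : ∀ z : Z, ((pC z : Z)) = z - C' (C z) := fun z => rfl
  have pB_ker : ∀ t : ↥(LinearMap.ker B.toLinearMap), pB (t : Y) = t := by
    intro t
    apply Subtype.ext
    rw [pB_coe, (show B (t : Y) = 0 from LinearMap.mem_ker.mp t.2), map_zero, sub_zero]
  have pC_ker : ∀ k : ↥(LinearMap.ker C.toLinearMap), pC (k : Z) = k := by
    intro k
    apply Subtype.ext
    rw [pC_coe, (show C (k : Z) = 0 from LinearMap.mem_ker.mp k.2), map_zero, sub_zero]
  have pB_B' : ∀ y, pB (B' y) = 0 := by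
    intro y
    apply Subtype.ext
    rw [pB_coe, idB' y]
    simp
  have pC_C' : ∀ z, pC (C' z) = 0 := by
    intro z
    apply Subtype.ext
    rw [pC_coe, idC z]
    simp
  -- the completion operators
  set D : Y →L[ℝ] X := ρA.comp (J₁.comp pB) with hD
  set E : Z →L[ℝ] X :=
    ρA.comp (ρ₁.comp (((Φ.symm : _ →L[ℝ] _)).comp (π₂.comp pC))) with hE
  set F : Z →L[ℝ] Y := ρB.comp (J₂'.comp pC) with hF
  have hDapp : ∀ y : Y, D y = ρA (J₁ (pB y)) := fun _ => rfl
  have hEapp : ∀ z : Z, E z = ρA (ρ₁ (Φ.symm (π₂ (pC z)))) := fun _ => rfl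
  have hFapp : ∀ z : Z, F z = ρB (J₂' (pC z)) := fun _ => rfl
  refine ⟨D, E, F, ?_⟩
  -- the inverse operator
  set fstL := ContinuousLinearMap.fst ℝ X (Y × Z)
  set snd1 := (ContinuousLinearMap.fst ℝ Y Z).comp (ContinuousLinearMap.snd ℝ X (Y × Z))
  set snd2 := (ContinuousLinearMap.snd ℝ Y Z).comp (ContinuousLinearMap.snd ℝ X (Y × Z))
  set M' : (X × Y × Z) →L[ℝ] (X × Y × Z) :=
    (A'.comp fstL).prod
      ((B'.comp snd1 + (LinearMap.ker B.toLinearMap).subtypeL.comp ((J₁'.comp πA).comp fstL)).prod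
        (C'.comp snd2 + (LinearMap.ker C.toLinearMap).subtypeL.comp
          (J₂.comp (πB.comp snd1) +
            ρ₂.comp (((Φ : _ →L[ℝ] _).comp (π₁.comp πA)).comp fstL)))) with hM'
  have hM'apply : ∀ (u : X) (v : Y) (w : Z),
      M' (u, v, w) = (A' u,
        B' v + ((J₁' (πA u) : ↥(LinearMap.ker B.toLinearMap)) : Y),
        C' w + ((J₂ (πB v) + ρ₂ (Φ (π₁ (πA u))) : ↥(LinearMap.ker C.toLinearMap)) : Z)) :=
    fun u v w => rfl
  refine ⟨M', ?_, ?_⟩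
  · -- M' ∘ M = id
    refine ContinuousLinearMap.ext fun p => ?_
    obtain ⟨x, y, z⟩ := p
    rw [ContinuousLinearMap.comp_apply, ContinuousLinearMap.id_apply, triM_apply, hM'apply]
    have huA : πA (A x + D y + E z) = J₁ (pB y) + ρ₁ (Φ.symm (π₂ (pC z))) := by
      rw [map_add, map_add, πA_A, hDapp, hEapp, πρA, πρA, zero_add]
    refine Prod.ext ?_ (Prod.ext ?_ ?_)
    · show A' (A x + D y + E z) = x
      rw [map_add, map_add, idA, hDapp, hEapp, A'ρA, A'ρA, add_zero, add_zero]
    · show B' (B y + F z) + ((J₁' (πA (A x + D y + E z)) : ↥(LinearMap.ker B.toLinearMap)) : Y) = y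
      rw [huA, hFapp]
      simp only [map_add, idJ1, J1ρ1, B'ρB, add_zero, Submodule.coe_add,
        ZeroMemClass.coe_zero]
      rw [pB_coe]
      abel
    · show C' (C z) + ((J₂ (πB (B y + F z)) + ρ₂ (Φ (π₁ (πA (A x + D y + E z))))
          : ↥(LinearMap.ker C.toLinearMap)) : Z) = z
      rw [huA, hFapp]
      simp only [map_add, πB_B, πρB, zero_add, π1J1, πρ1,
        ContinuousLinearEquiv.coe_coe, ContinuousLinearEquiv.apply_symm_apply]
      rw [ρ2_mk]
      have hcan : J₂ (J₂' (pC z)) + (pC z - J₂ (J₂' (pC z))) = pC z := by abel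
      rw [hcan, pC_coe]
      abel
  · -- M ∘ M' = id
    refine ContinuousLinearMap.ext fun p => ?_
    obtain ⟨u, v, w⟩ := p
    rw [ContinuousLinearMap.comp_apply, ContinuousLinearMap.id_apply, hM'apply, triM_apply]
    set t : ↥(LinearMap.ker B.toLinearMap) := J₁' (πA u) with ht
    set k : ↥(LinearMap.ker C.toLinearMap) := J₂ (πB v) + ρ₂ (Φ (π₁ (πA u))) with hk
    have hy : pB (B' v + (t : Y)) = t := by
      rw [map_add, pB_B', pB_ker, zero_add]
    have hz : pC (C' w + (k : Z)) = k := by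
      rw [map_add, pC_C', pC_ker, zero_add]
    refine Prod.ext ?_ (Prod.ext ?_ ?_)
    · show A (A' u) + D (B' v + (t : Y)) + E (C' w + (k : Z)) = u
      have hD2 : D (B' v + (t : Y)) = ρA (J₁ t) := by rw [hDapp, hy]
      have hE2 : E (C' w + (k : Z)) = ρA (ρ₁ (π₁ (πA u))) := by
        rw [hEapp, hz, hk, map_add, π2J2, zero_add, πρ2]
        simp only [ContinuousLinearEquiv.coe_coe, ContinuousLinearEquiv.symm_apply_apply]
      have hsum : ρA (J₁ t) + ρA (ρ₁ (π₁ (πA u))) = ρA (πA u) := by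
        rw [ρ1_mk, ← map_add, ht]
        congr 1
        abel
      rw [hD2, hE2, add_assoc, hsum, ρA_mk]
      abel
    · show B (B' v + (t : Y)) + F (C' w + (k : Z)) = v
      have hF2 : F (C' w + (k : Z)) = ρB (πB v) := by
        rw [hFapp, hz, hk, map_add, idJ2, J2ρ2, add_zero]
      rw [hF2, map_add, (show B (t : Y) = 0 from LinearMap.mem_ker.mp t.2), add_zero, ρB_mk]
      abel
    · show C (C' w + (k : Z)) = w
      rw [map_add, idC, (show C (k : Z) = 0 from LinearMap.mem_ker.mp k.2), add_zero]
end

section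
/- Suppose M_{D,E,F} with diagonal A ∈ B(X), B ∈ B(Y) inner regular, C ∈ B(Z) is invertible for some D, E, F. Then A is left invertible and C is right invertible. -/
/-- If some completion `M_{D,E,F}` with diagonal `A`, `B` inner regular, `C` is
invertible, then `A` is left invertible and `C` is right invertible. -/
theorem completion_necessary_corners {X Y Z : Type*}
    [NormedAddCommGroup X] [NormedSpace ℝ X] [CompleteSpace X]
    [NormedAddCommGroup Y] [NormedSpace ℝ Y] [CompleteSpace Y]
    [NormedAddCommGroup Z] [NormedSpace ℝ Z] [CompleteSpace Z]
    (A : X →L[ℝ] X) (B : Y →L[ℝ] Y) (C : Z →L[ℝ] Z)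
    (hB : ∃ B' : Y →L[ℝ] Y, B.comp (B'.comp B) = B)
    (h : ∃ (D : Y →L[ℝ] X) (E : Z →L[ℝ] X) (F : Z →L[ℝ] Y),
      IsInvertibleCLM (triM A B C D E F)) :
    (∃ A' : X →L[ℝ] X, A'.comp A = ContinuousLinearMap.id ℝ X) ∧
    (∃ C' : Z →L[ℝ] Z, C.comp C' = ContinuousLinearMap.id ℝ Z) := by
  obtain ⟨D, E, F, M', hL, hR⟩ := h
  constructor
  · refine ⟨(ContinuousLinearMap.fst ℝ X (Y × Z)).comp
      (M'.comp (ContinuousLinearMap.inl ℝ X (Y × Z))), ?_⟩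
    ext x
    have h1 : triM A B C D E F (x, 0, 0) = (A x, 0, 0) := by
      simp [triM]
    have h2 := congrArg (fun f : (X × Y × Z) →L[ℝ] (X × Y × Z) => f (x, 0, 0)) hL
    simp only [ContinuousLinearMap.comp_apply, ContinuousLinearMap.id_apply] at h2
    rw [h1] at h2
    have h3 := congrArg Prod.fst h2
    rw [Prod.mk_zero_zero] at h3
    simpa using h3
  · refine ⟨((ContinuousLinearMap.snd ℝ Y Z).comp
      ((ContinuousLinearMap.snd ℝ X (Y × Z)).comp
        (M'.comp ((ContinuousLinearMap.inr ℝ X (Y × Z)).comp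
          (ContinuousLinearMap.inr ℝ Y Z))))), ?_⟩
    ext z
    have h2 := congrArg (fun f : (X × Y × Z) →L[ℝ] (X × Y × Z) =>
      f ((0 : X), (0 : Y), z)) hR
    simp only [ContinuousLinearMap.comp_apply, ContinuousLinearMap.id_apply] at h2
    have h3 := congrArg (fun p : X × Y × Z => p.2.2) h2
    simp only [triM, ContinuousLinearMap.prod_apply, ContinuousLinearMap.comp_apply,
      ContinuousLinearMap.coe_snd'] at h3
    simpa using h3
end

section
/- Suppose M_{D,E,F} with diagonal A ∈ B(X), B ∈ B(Y) inner regular, C ∈ B(Z) is invertible for some D, E, F. Then N(B) × N(C) is linearly isomorphic to X/R(A) × Y/R(B). -/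
/-!
Write `M_{D,E,F}` as the block matrix `[[A, S], [0, G]]` on `X × (Y × Z)`, where
`S (y, z) = D y + E z` and `G = [[B, F], [0, C]]`. If `M` is invertible, then `v ↦ [S v]` is an
isomorphism `N(G) ≅ X/R(A)`, inverted by `[u] ↦ (M⁻¹ (u, 0)).2`, and `w ↦ (M⁻¹ (0, w)).2` is a
bounded right inverse of `G`.

The snake lemma for `G` gives an exact sequence `0 → N(B) → N(G) → N(C) → Y/R(B) → 0` with
connecting map `z ↦ [F z]`, and the inner inverse `B'` splits it at both ends. Since `BB'` is a
bounded projection onto `R(B)`, lifting `(y - BB'y, 0)` through `G` gives a section of the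
connecting map, so `N(C) ≅ Y/R(B) × K` with `K = {z ∈ N(C) | F z ∈ R(B)}`; and
`(n, z) ↦ (n - B'F z, z)` is an isomorphism `N(B) × K ≅ N(G)`. Hence
`N(B) × N(C) ≅ N(G) × Y/R(B) ≅ X/R(A) × Y/R(B)`.
-/

section

open ContinuousLinearMap

variable {R : Type*} [Ring R]

section UpperTriangular

variable {X U V W : Type*}
  [AddCommGroup X] [Module R X] [TopologicalSpace X]
  [AddCommGroup U] [Module R U] [TopologicalSpace U] [ContinuousAdd U]
  [AddCommGroup V] [Module R V] [TopologicalSpace V]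
  [AddCommGroup W] [Module R W] [TopologicalSpace W]

def upperTriangular (A : X →L[R] U) (S : V →L[R] U) (G : V →L[R] W) : X × V →L[R] U × W :=
  (A.coprod S).prod (G.comp (snd R X V))

@[simp]
theorem upperTriangular_apply (A : X →L[R] U) (S : V →L[R] U) (G : V →L[R] W) (p : X × V) :
    upperTriangular A S G p = (A p.1 + S p.2, G p.2) :=
  rfl

theorem mem_ker_upperTriangular {A : X →L[R] U} {S : V →L[R] U} {G : V →L[R] W} {p : X × V} :
    p ∈ (upperTriangular A S G).ker ↔ A p.1 + S p.2 = 0 ∧ G p.2 = 0 := by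
  simp [Prod.ext_iff]

variable {A : X →L[R] U} {S : V →L[R] U} {G : V →L[R] W}

section RightInverse

variable {T : (U × W) →L[R] (X × V)} (hT : Function.RightInverse T (upperTriangular A S G))
include hT

theorem upperTriangular_apply_of_rightInverse (p : U × W) :
    A (T p).1 + S (T p).2 = p.1 ∧ G (T p).2 = p.2 := by
  have h := hT p
  rw [upperTriangular_apply] at h
  exact ⟨congrArg Prod.fst h, congrArg Prod.snd h⟩

theorem rightInverse_snd_comp_inr : Function.RightInverse (snd R X V ∘L T ∘L inr R U W) G :=
  fun w => (upperTriangular_apply_of_rightInverse hT (0, w)).2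

end RightInverse

variable {e : (X × V) ≃L[R] (U × W)} (he : ⇑e = upperTriangular A S G)
include he

theorem upperTriangular_symm_apply (x : X) (v : V) : e.symm (A x + S v, G v) = (x, v) := by
  rw [← upperTriangular_apply A S G (x, v), ← he, e.symm_apply_apply]

theorem upperTriangular_symm_apply_range (x : X) : e.symm (A x, 0) = (x, 0) := by
  simpa using upperTriangular_symm_apply he x 0

theorem upperTriangular_symm_apply_ker {v : V} (hv : G v = 0) : e.symm (S v, 0) = (0, v) := by
  simpa [hv] using upperTriangular_symm_apply he 0 v

theorem upperTriangular_rightInverse :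
    Function.RightInverse (e.symm : (U × W) →L[R] (X × V)) (upperTriangular A S G) := by
  rw [← he]
  exact e.apply_symm_apply

def kerEquivQuotientRange : G.ker ≃L[R] U ⧸ A.range :=
  ContinuousLinearEquiv.equivOfInverse (A.range.mkQL ∘L S ∘L G.ker.subtypeL)
    (A.range.liftQL
      ((snd R X V ∘L (e.symm : (U × W) →L[R] (X × V)) ∘L inl R U W).codRestrict _
        fun u => (upperTriangular_apply_of_rightInverse (upperTriangular_rightInverse he) _).2)
      (by
        rintro _ ⟨x, rfl⟩
        exact LinearMap.mem_ker.2 (Subtype.ext congr($(upperTriangular_symm_apply_range he x).2))))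
    (fun v => Subtype.ext congr($(upperTriangular_symm_apply_ker he v.2).2))
    (fun q => by
      induction q using Submodule.Quotient.induction_on with | _ u
      set p := e.symm (u, 0)
      have hp : A p.1 + S p.2 = u :=
        (upperTriangular_apply_of_rightInverse (upperTriangular_rightInverse he) _).1
      change Submodule.Quotient.mk (S p.2) = Submodule.Quotient.mk u
      refine (Submodule.Quotient.eq _).2 ⟨-p.1, ?_⟩
      rw [coe_coe, map_neg, ← hp]
      abel)

end UpperTriangular

section InnerRegular

variable {Y Z Y₁ Z₁ : Type*}
  [AddCommGroup Y] [Module R Y] [TopologicalSpace Y]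
  [AddCommGroup Z] [Module R Z] [TopologicalSpace Z]
  [AddCommGroup Y₁] [Module R Y₁] [TopologicalSpace Y₁]
  [AddCommGroup Z₁] [Module R Z₁] [TopologicalSpace Z₁]

def connectingMap (B : Y →L[R] Y₁) (F : Z →L[R] Y₁) (C : Z →L[R] Z₁) :
    C.ker →L[R] Y₁ ⧸ B.range :=
  B.range.mkQL ∘L F ∘L C.ker.subtypeL

theorem mem_ker_connectingMap {B : Y →L[R] Y₁} {F : Z →L[R] Y₁} {C : Z →L[R] Z₁} {z : C.ker} :
    z ∈ (connectingMap B F C).ker ↔ F z ∈ B.range := by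
  simp [connectingMap, Submodule.Quotient.mk_eq_zero]

variable {B : Y →L[R] Y₁} {F : Z →L[R] Y₁} {C : Z →L[R] Z₁} {B' : Y₁ →L[R] Y}
  (hB : B.comp (B'.comp B) = B)
include hB

theorem apply_innerInverse_apply (y : Y) : B (B' (B y)) = B y :=
  congr($hB y)

theorem apply_innerInverse_of_mem_range {y : Y₁} (hy : y ∈ B.range) : B (B' y) = y := by
  obtain ⟨y, rfl⟩ := hy
  exact apply_innerInverse_apply hB y

variable [IsTopologicalAddGroup Y₁]

section ConnectingMapSection

variable {T : (Y₁ × Z₁) →L[R] (Y × Z)} (hT : Function.RightInverse T (upperTriangular B F C))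
include hT

def connectingMapSection : Y₁ ⧸ B.range →L[R] C.ker :=
  B.range.liftQL
    ((snd R Y Z ∘L T ∘L inl R Y₁ Z₁ ∘L (.id R Y₁ - B ∘L B')).codRestrict C.ker
      fun y => (upperTriangular_apply_of_rightInverse hT _).2)
    (by
      rintro _ ⟨y, rfl⟩
      have h : B y - B (B' (B y)) = 0 := by rw [apply_innerInverse_apply hB, sub_self]
      refine LinearMap.mem_ker.2 (Subtype.ext ?_)
      change (T (B y - B (B' (B y)), 0)).2 = 0
      rw [h, Prod.mk_zero_zero, map_zero, Prod.snd_zero])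

theorem rightInverse_connectingMapSection :
    Function.RightInverse (connectingMapSection hB hT) (connectingMap B F C) := by
  intro q
  induction q using Submodule.Quotient.induction_on with | _ y
  set p := T (y - B (B' y), 0)
  have hp : F p.2 = y - B (B' y) - B p.1 :=
    eq_sub_of_add_eq ((add_comm _ _).trans (upperTriangular_apply_of_rightInverse hT _).1)
  change Submodule.Quotient.mk (F p.2) = Submodule.Quotient.mk y
  refine (Submodule.Quotient.eq _).2 ⟨-(p.1 + B' y), ?_⟩
  rw [coe_coe, map_neg, map_add, hp]
  abel

end ConnectingMapSection

variable [IsTopologicalAddGroup Y]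

def prodKerConnectingMapEquiv :
    (B.ker × (connectingMap B F C).ker) ≃L[R] (upperTriangular B F C).ker :=
  let z : B.ker × (connectingMap B F C).ker →L[R] Z :=
    C.ker.subtypeL ∘L (connectingMap B F C).ker.subtypeL ∘L snd R B.ker _
  let y : (upperTriangular B F C).ker →L[R] Y :=
    fst R Y Z ∘L (upperTriangular B F C).ker.subtypeL
  let z' : (upperTriangular B F C).ker →L[R] Z :=
    snd R Y Z ∘L (upperTriangular B F C).ker.subtypeL
  ContinuousLinearEquiv.equivOfInverse
    (((B.ker.subtypeL ∘L fst R B.ker _ - B' ∘L F ∘L z).prod z).codRestrict _ fun p => by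
        refine mem_ker_upperTriangular.2 ⟨?_, (p.2 : C.ker).2⟩
        change B (p.1 - B' (F (p.2 : C.ker))) + F (p.2 : C.ker) = 0
        rw [map_sub, apply_innerInverse_of_mem_range hB (mem_ker_connectingMap.1 p.2.2),
          show B p.1 = 0 from p.1.2, zero_sub, neg_add_cancel])
    ((((.id R Y - B' ∘L B) ∘L y).codRestrict B.ker fun w => by
        change B (y w - B' (B (y w))) = 0
        rw [map_sub, apply_innerInverse_apply hB, sub_self]).prod
      ((z'.codRestrict C.ker fun w => (mem_ker_upperTriangular.1 w.2).2).codRestrict _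
        fun w => mem_ker_connectingMap.2 ⟨-y w, by
          rw [map_neg, neg_eq_iff_add_eq_zero]
          exact (mem_ker_upperTriangular.1 w.2).1⟩))
    (fun p => by
      refine Prod.ext (Subtype.ext ?_) (Subtype.ext (Subtype.ext rfl))
      change (p.1 : Y) - B' (F (p.2 : C.ker)) - B' (B (p.1 - B' (F (p.2 : C.ker)))) = p.1
      rw [map_sub B, show B p.1 = 0 from p.1.2,
        apply_innerInverse_of_mem_range hB (mem_ker_connectingMap.1 p.2.2), zero_sub, map_neg,
        sub_neg_eq_add, sub_add_cancel])
    (fun w => by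
      refine Subtype.ext (Prod.ext ?_ rfl)
      change y w - B' (B (y w)) - B' (F (z' w)) = y w
      have hw : B (y w) + F (z' w) = 0 := (mem_ker_upperTriangular.1 w.2).1
      rw [sub_sub, ← map_add, hw, map_zero, sub_zero])

variable [IsTopologicalAddGroup Z] {T : (Y₁ × Z₁) →L[R] (Y × Z)}
  (hT : Function.RightInverse T (upperTriangular B F C))

def kerProdKerEquiv : (B.ker × C.ker) ≃L[R] ((upperTriangular B F C).ker × (Y₁ ⧸ B.range)) :=
  ((ContinuousLinearEquiv.refl R B.ker).prodCongr
      (.equivOfRightInverse _ _ (rightInverse_connectingMapSection hB hT))).trans <|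
    ((ContinuousLinearEquiv.refl R B.ker).prodCongr (.prodComm R _ _)).trans <|
      (ContinuousLinearEquiv.prodAssoc R _ _ _).symm.trans <|
        (prodKerConnectingMapEquiv hB).prodCongr (.refl R _)

end InnerRegular

theorem triM_eq_upperTriangular {X Y Z : Type*}
    [NormedAddCommGroup X] [NormedSpace ℝ X]
    [NormedAddCommGroup Y] [NormedSpace ℝ Y]
    [NormedAddCommGroup Z] [NormedSpace ℝ Z]
    (A : X →L[ℝ] X) (B : Y →L[ℝ] Y) (C : Z →L[ℝ] Z)
    (D : Y →L[ℝ] X) (E : Z →L[ℝ] X) (F : Z →L[ℝ] Y) :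
    triM A B C D E F = upperTriangular A (D.coprod E) (upperTriangular B F C) := by
  ext <;> simp [triM, add_assoc]

end

theorem completion_necessary_iso_general {X Y Z : Type*}
    [NormedAddCommGroup X] [NormedSpace ℝ X]
    [NormedAddCommGroup Y] [NormedSpace ℝ Y]
    [NormedAddCommGroup Z] [NormedSpace ℝ Z]
    (A : X →L[ℝ] X) (B : Y →L[ℝ] Y) (C : Z →L[ℝ] Z)
    (hB : ∃ B' : Y →L[ℝ] Y, B.comp (B'.comp B) = B)
    (h : ∃ (D : Y →L[ℝ] X) (E : Z →L[ℝ] X) (F : Z →L[ℝ] Y),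
      IsInvertibleCLM (triM A B C D E F)) :
    Nonempty ((↥(LinearMap.ker (B : Y →ₗ[ℝ] Y)) × ↥(LinearMap.ker (C : Z →ₗ[ℝ] Z)))
      ≃L[ℝ] ((X ⧸ LinearMap.range (A : X →ₗ[ℝ] X)) × (Y ⧸ LinearMap.range (B : Y →ₗ[ℝ] Y)))) := by
  obtain ⟨B', hB'⟩ := hB
  obtain ⟨D, E, F, T, hTM, hMT⟩ := h
  rw [triM_eq_upperTriangular] at hTM hMT
  have hM : ⇑(ContinuousLinearEquiv.equivOfInverse' _ T hMT hTM) =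
      upperTriangular A (D.coprod E) (upperTriangular B F C) := rfl
  have hG := rightInverse_snd_comp_inr (upperTriangular_rightInverse hM)
  exact ⟨(kerProdKerEquiv hB' hG).trans ((kerEquivQuotientRange hM).prodCongr (.refl ℝ _))⟩

/-- If some completion `M_{D,E,F}` with diagonal `A`, `B` inner regular, `C` is
invertible, then `N(B) × N(C) ≅ X/R(A) × Y/R(B)`. -/
theorem completion_necessary_iso {X Y Z : Type*}
    [NormedAddCommGroup X] [NormedSpace ℝ X] [CompleteSpace X]
    [NormedAddCommGroup Y] [NormedSpace ℝ Y] [CompleteSpace Y]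
    [NormedAddCommGroup Z] [NormedSpace ℝ Z] [CompleteSpace Z]
    (A : X →L[ℝ] X) (B : Y →L[ℝ] Y) (C : Z →L[ℝ] Z)
    (hB : ∃ B' : Y →L[ℝ] Y, B.comp (B'.comp B) = B)
    (h : ∃ (D : Y →L[ℝ] X) (E : Z →L[ℝ] X) (F : Z →L[ℝ] Y),
      IsInvertibleCLM (triM A B C D E F)) :
    Nonempty ((↥(LinearMap.ker (B : Y →ₗ[ℝ] Y)) × ↥(LinearMap.ker (C : Z →ₗ[ℝ] Z)))
      ≃L[ℝ] ((X ⧸ LinearMap.range (A : X →ₗ[ℝ] X)) × (Y ⧸ LinearMap.range (B : Y →ₗ[ℝ] Y)))) :=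
  completion_necessary_iso_general A B C hB h
end

section
/- Let D_i ∈ B(X_i) for 1 ≤ i ≤ n with D_2, …, D_{n−1} inner regular. If T_n^d(A) is invertible for some choice of strictly upper entries A, then N(D_2) × ⋯ × N(D_n) is linearly isomorphic to X_1/R(D_1) × ⋯ × X_{n−1}/R(D_{n−1}). -/
open Function

namespace LinearMap

variable {R ι : Type*} [Ring R] [LinearOrder ι] {X Y : ι → Type*}
  [∀ i, AddCommGroup (X i)] [∀ i, Module R (X i)] [∀ i, AddCommGroup (Y i)] [∀ i, Module R (Y i)]

/-- By linearity this says `T x i = D i (x i) + (terms in the x j with i < j)`. -/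
def IsUpperTriangular (T : (∀ i, X i) →ₗ[R] ∀ i, Y i) (D : ∀ i, X i →ₗ[R] Y i) : Prop :=
  ∀ x i, (∀ j, i < j → x j = 0) → T x i = D i (x i)

variable {T : (∀ i, X i) →ₗ[R] ∀ i, Y i} {D : ∀ i, X i →ₗ[R] Y i}

namespace IsUpperTriangular

theorem apply_single_of_le (hT : T.IsUpperTriangular D) {a i : ι} (hai : a ≤ i) (x : X a) :
    T (Pi.single a x) i = Pi.single a (D a x) i := by
  rw [hT _ i fun j hij => Pi.single_eq_of_ne (hai.trans_lt hij).ne' x]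
  exact Pi.apply_single (fun j => D j) (fun j => map_zero _) a x i

theorem injective [WellFoundedGT ι] (hT : T.IsUpperTriangular D) (hD : ∀ i, Injective (D i)) :
    Injective T := by
  refine (injective_iff_map_eq_zero T).mpr fun x hx => funext fun i => ?_
  induction i using WellFoundedGT.induction with
  | _ i ih => exact (map_eq_zero_iff _ (hD i)).mp (by rw [← hT x i ih, hx]; rfl)

theorem surjective [Fintype ι] (hT : T.IsUpperTriangular D) (hD : ∀ i, Surjective (D i)) :
    Surjective T := by
  suffices hsingle : ∀ i (y : Y i), Pi.single i y ∈ range T by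
    intro y
    rw [← Finset.univ_sum_single y]
    exact sum_mem fun i _ => hsingle i (y i)
  intro i
  induction i using WellFoundedLT.induction with
  | _ i ih =>
  intro y
  obtain ⟨x, rfl⟩ := hD i y
  set z := T (Pi.single i x) - Pi.single i (D i x)
  -- `z` vanishes from `i` on, so it is a sum of singles below `i`
  have hz : z ∈ range T := by
    rw [← Finset.univ_sum_single z]
    refine sum_mem fun j _ => ?_
    rcases lt_or_ge j i with hji | hij
    · exact ih j hji _
    · rw [show z j = 0 by simp [z, hT.apply_single_of_le hij], Pi.single_zero]
      exact zero_mem _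
  simpa [z] using sub_mem (mem_range_self T (Pi.single i x)) hz

theorem injective_diag_of_isBot (hT : T.IsUpperTriangular D) (hinj : Injective T) {a : ι}
    (ha : IsBot a) : Injective (D a) := by
  refine (injective_iff_map_eq_zero _).mpr fun x hx => ?_
  have : T (Pi.single a x) = T 0 := by
    ext i
    rw [hT.apply_single_of_le (ha i), hx, Pi.single_zero, map_zero]
  simpa using hinj this

theorem surjective_diag_of_isTop (hT : T.IsUpperTriangular D) (hsurj : Surjective T) {a : ι}
    (ha : IsTop a) : Surjective (D a) := fun y => by
  obtain ⟨x, hx⟩ := hsurj (Pi.single a y)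
  exact ⟨x a, by rw [← hT x a fun j hj => absurd (ha j) hj.not_ge, hx, Pi.single_eq_same]⟩

theorem bijective [Fintype ι] (hT : T.IsUpperTriangular D) (hD : ∀ i, Bijective (D i)) :
    Bijective T :=
  ⟨hT.injective fun i => (hD i).1, hT.surjective fun i => (hD i).2⟩

end IsUpperTriangular

theorem bijective_coprod_of_isCompl {R M N : Type*} [Ring R] [AddCommGroup M] [Module R M]
    [AddCommGroup N] [Module R N] {f : M →ₗ[R] N} {p : Submodule R M} {q : Submodule R N}
    (hp : IsCompl (ker f) p) (hq : IsCompl (range f) q) :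
    Bijective ((f ∘ₗ p.subtype).coprod q.subtype) := by
  let e : p ≃ₗ[R] range f := (Submodule.quotientEquivOfIsCompl _ _ hp).symm ≪≫ₗ f.quotKerEquivRange
  have : (f ∘ₗ p.subtype).coprod q.subtype = (Submodule.prodEquivOfIsCompl _ _ hq).toLinearMap ∘ₗ
      (e.prodCongr (LinearEquiv.refl R q)).toLinearMap := by
    ext <;> simp [e]
  rw [this]
  exact ((e.prodCongr (LinearEquiv.refl R q)).trans (Submodule.prodEquivOfIsCompl _ _ hq)).bijective

end LinearMap

namespace LinearEquiv

variable (R : Type*) {ι : Type*} (A B : ι → Type*) [Semiring R]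
  [∀ i, AddCommMonoid (A i)] [∀ i, Module R (A i)] [∀ i, AddCommMonoid (B i)] [∀ i, Module R (B i)]

@[simps]
def arrowProdEquivProdArrow : (∀ i, A i × B i) ≃ₗ[R] (∀ i, A i) × ∀ i, B i where
  __ := Equiv.arrowProdEquivProdArrow ι A B
  map_add' _ _ := rfl
  map_smul' _ _ := rfl

theorem bijective_snd_comp_inr {R U V W : Type*} [Ring R] [AddCommGroup U] [Module R U]
    [AddCommGroup V] [Module R V] [AddCommGroup W] [Module R W] (e : (U × V) ≃ₗ[R] U × W)
    (he : ∀ u, e (u, 0) = (u, 0)) :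
    Bijective (LinearMap.snd R U W ∘ₗ e.toLinearMap ∘ₗ LinearMap.inr R U V) := by
  refine ⟨(injective_iff_map_eq_zero _).mpr fun v hv => ?_, fun w => ?_⟩
  · have : e (0, v) = e ((e (0, v)).1, 0) := by
      rw [he]; exact Prod.ext rfl hv
    exact congrArg Prod.snd (e.injective this)
  · set p := e.symm (0, w)
    have hp : ((0 : U), p.2) = p - (p.1, 0) := by ext <;> simp
    refine ⟨p.2, ?_⟩
    simp [hp, map_sub, he, p]

end LinearEquiv

namespace LinearMap.IsUpperTriangular

variable {K ι : Type*} [DivisionRing K] [LinearOrder ι] [Fintype ι] {X Y : ι → Type*}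
  [∀ i, AddCommGroup (X i)] [∀ i, Module K (X i)] [∀ i, AddCommGroup (Y i)] [∀ i, Module K (Y i)]
  {T : (∀ i, X i) →ₗ[K] ∀ i, Y i} {D : ∀ i, X i →ₗ[K] Y i}

theorem nonempty_ker_equiv_quotient_range (hT : T.IsUpperTriangular D) (hbij : Bijective T) :
    Nonempty ((∀ i, ker (D i)) ≃ₗ[K] ∀ i, Y i ⧸ range (D i)) := by
  choose M hM using fun i => (ker (D i)).exists_isCompl
  choose S hS using fun i => (range (D i)).exists_isCompl
  let eX : ((∀ i, M i) × ∀ i, ker (D i)) ≃ₗ[K] ∀ i, X i :=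
    (LinearEquiv.arrowProdEquivProdArrow K _ _).symm ≪≫ₗ
      LinearEquiv.piCongrRight fun i => Submodule.prodEquivOfIsCompl _ _ (hM i).symm
  let Φ : ((∀ i, M i) × ∀ i, S i) →ₗ[K] ∀ i, Y i :=
    (T ∘ₗ piMap fun i => (M i).subtype).coprod (piMap fun i => (S i).subtype)
  have hΦ : Bijective Φ := by
    have htri : (Φ ∘ₗ (LinearEquiv.arrowProdEquivProdArrow K _ _).toLinearMap).IsUpperTriangular
        fun i => (D i ∘ₗ (M i).subtype).coprod (S i).subtype := fun x i hx => by
      change T (fun j => ((x j).1 : X j)) i + (x i).2 = D i (x i).1 + (x i).2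
      rw [hT _ i fun j hj => by simp [hx j hj]]
    simpa using (htri.bijective fun i => bijective_coprod_of_isCompl (hM i) (hS i)).comp
      (LinearEquiv.arrowProdEquivProdArrow K _ _).symm.bijective
  let e := eX ≪≫ₗ LinearEquiv.ofBijective T hbij ≪≫ₗ (LinearEquiv.ofBijective Φ hΦ).symm
  have he : ∀ m, e (m, 0) = (m, 0) := fun m => by
    have hX : eX (m, 0) = fun i => (m i : X i) := by ext i; simp [eX]
    simp only [e, LinearEquiv.trans_apply, LinearEquiv.symm_apply_eq, hX]
    exact (add_zero _).symm
  exact ⟨LinearEquiv.ofBijective _ (e.bijective_snd_comp_inr he) ≪≫ₗ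
    LinearEquiv.piCongrRight fun i => (Submodule.quotientEquivOfIsCompl _ _ (hS i)).symm⟩

end LinearMap.IsUpperTriangular

def Fin.snocLinearEquiv (R : Type*) {n : ℕ} (M : Fin (n + 1) → Type*) [Semiring R]
    [∀ i, AddCommMonoid (M i)] [∀ i, Module R (M i)] :
    (M (Fin.last n) × ∀ i : Fin n, M i.castSucc) ≃ₗ[R] ∀ i, M i where
  __ := Fin.snocEquiv M
  map_add' x y := by ext i; cases i using Fin.lastCases <;> simp
  map_smul' c x := by ext i; cases i using Fin.lastCases <;> simp

theorem IsInvertibleCLM.bijective {U V : Type*} [SeminormedAddCommGroup U] [NormedSpace ℝ U]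
    [SeminormedAddCommGroup V] [NormedSpace ℝ V] {T : U →L[ℝ] V} (hT : IsInvertibleCLM T) :
    Bijective T := by
  obtain ⟨T', hl, hr⟩ := hT
  exact bijective_iff_has_inverse.mpr ⟨T', fun x => congr($hl x), fun y => congr($hr y)⟩

theorem nbyn_necessary_iso_general {n : ℕ} {X : Fin (n + 1) → Type*}
    [∀ i, NormedAddCommGroup (X i)] [∀ i, NormedSpace ℝ (X i)]
    (D : ∀ i, X i →L[ℝ] X i)
    (h : ∃ (A : ∀ i j : Fin (n + 1), X j →L[ℝ] X i)
        (T : (∀ i, X i) →L[ℝ] (∀ i, X i)),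
      (∀ (f : ∀ i, X i) (i : Fin (n + 1)),
        T f i = D i (f i) + ∑ j ∈ Finset.univ.filter (fun j => i < j), A i j (f j)) ∧
      IsInvertibleCLM T) :
    Nonempty ((∀ i : Fin n, ↥(LinearMap.ker (D i.succ : X i.succ →ₗ[ℝ] X i.succ)))
      ≃ₗ[ℝ] (∀ i : Fin n, (X i.castSucc ⧸ LinearMap.range (D i.castSucc : X i.castSucc →ₗ[ℝ] X i.castSucc)))) := by
  obtain ⟨A, T, hTD, hT⟩ := h
  have htri : (T : (∀ i, X i) →ₗ[ℝ] ∀ i, X i).IsUpperTriangular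
      fun i => (D i : X i →ₗ[ℝ] X i) := fun f i hf => by
    change T f i = D i (f i)
    rw [hTD, Finset.sum_eq_zero fun j hj => ?_, add_zero]
    rw [hf j (Finset.mem_filter.mp hj).2, map_zero]
  obtain ⟨e⟩ := htri.nonempty_ker_equiv_quotient_range hT.bijective
  have : Unique (LinearMap.ker (D 0 : X 0 →ₗ[ℝ] X 0)) :=
    have := Submodule.subsingleton_iff_eq_bot.mpr <| LinearMap.ker_eq_bot.mpr <|
      htri.injective_diag_of_isBot hT.bijective.1 isBot_zero
    uniqueOfSubsingleton 0
  have : Unique (X (Fin.last n) ⧸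
      LinearMap.range (D (Fin.last n) : X (Fin.last n) →ₗ[ℝ] X (Fin.last n))) :=
    have := Submodule.Quotient.subsingleton_iff.mpr <| LinearMap.range_eq_top.mpr <|
      htri.surjective_diag_of_isTop hT.bijective.2 Fin.le_last
    uniqueOfSubsingleton 0
  exact ⟨(LinearEquiv.uniqueProd.symm ≪≫ₗ
      Fin.consLinearEquiv ℝ fun i => LinearMap.ker (D i : X i →ₗ[ℝ] X i)) ≪≫ₗ e ≪≫ₗ
    ((Fin.snocLinearEquiv ℝ fun i => X i ⧸ LinearMap.range (D i : X i →ₗ[ℝ] X i)).symm ≪≫ₗ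
      LinearEquiv.uniqueProd)⟩

/-- If some choice of strictly upper entries `A` makes the `n × n` upper triangular operator
matrix with diagonal `D_1, …, D_n` (the middle ones inner regular) invertible, then
`N(D_2) × ⋯ × N(D_n)` is linearly isomorphic to `X_1/R(D_1) × ⋯ × X_{n-1}/R(D_{n-1})`. -/
theorem nbyn_necessary_iso {n : ℕ} {X : Fin (n + 1) → Type*}
    [∀ i, NormedAddCommGroup (X i)] [∀ i, NormedSpace ℝ (X i)] [∀ i, CompleteSpace (X i)]
    (D : ∀ i, X i →L[ℝ] X i)
    (hreg : ∀ i, i ≠ 0 → i ≠ Fin.last n → ∃ D' : X i →L[ℝ] X i,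
      (D i).comp (D'.comp (D i)) = D i)
    (h : ∃ (A : ∀ i j : Fin (n + 1), X j →L[ℝ] X i)
        (T : (∀ i, X i) →L[ℝ] (∀ i, X i)),
      (∀ (f : ∀ i, X i) (i : Fin (n + 1)),
        T f i = D i (f i) + ∑ j ∈ Finset.univ.filter (fun j => i < j), A i j (f j)) ∧
      IsInvertibleCLM T) :
    Nonempty ((∀ i : Fin n, ↥(LinearMap.ker (D i.succ : X i.succ →ₗ[ℝ] X i.succ)))
      ≃ₗ[ℝ] (∀ i : Fin n, (X i.castSucc ⧸ LinearMap.range (D i.castSucc : X i.castSucc →ₗ[ℝ] X i.castSucc)))) :=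
  nbyn_necessary_iso_general D h
end
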